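/- Let p be an odd prime, G = V ⋊ ⟨c⟩ the quotient of C₂ ≀ C_p by its center, and v₁c^{a₁},…,v_nc^{a_n} a generating set of G with v_i ∈ V. Then at least one a_i ≢ 0 (mod p), and the commutators w_i = [c, v_i c^{a_i}] lie in V; moreover if additionally c is among the generators then {c, w₂,…,w_n} generates G whenever {c, v₂c^{a₂},…,v_nc^{a_n}} does. -/

import Mathlib

/-- The base group of the wreath product `C₂ ≀ C_p`, written multiplicatively. -/
abbrev WreathBase (p : ℕ) := Multiplicative (ZMod p → ZMod 2)

/-- The shift automorphism of the base group, by `k`. -/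
def shiftAddAut (p : ℕ) (k : ZMod p) : AddAut (ZMod p → ZMod 2) where
  toFun f i := f (i + k)
  invFun f i := f (i - k)
  left_inv f := by funext i; simp
  right_inv f := by funext i; simp
  map_add' f g := rfl

/-- The action of `C_p` on the base group by cyclic shifts. -/
def wreathShift (p : ℕ) : Multiplicative (ZMod p) →* MulAut (WreathBase p) where
  toFun k := AddEquiv.toMultiplicative (shiftAddAut p k.toAdd)
  map_one' := by
    ext f
    simp [shiftAddAut, AddEquiv.toMultiplicative]
  map_mul' a b := by
    ext f
    simp only [shiftAddAut, AddEquiv.toMultiplicative]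
    simp [add_assoc]

/-- The wreath product `C₂ ≀ C_p`. -/
abbrev Wreath (p : ℕ) := WreathBase p ⋊[wreathShift p] Multiplicative (ZMod p)

/-- The quotient `G = W / Z(W)` of the wreath product by its center. -/
abbrev WreathQuot (p : ℕ) := Wreath p ⧸ Subgroup.center (Wreath p)

/-- The canonical generator `c`, the image in `G` of the generator of `C_p`. -/
def cElem (p : ℕ) : WreathQuot p :=
  QuotientGroup.mk' _ (SemidirectProduct.inr (Multiplicative.ofAdd (1 : ZMod p)))

/-- `V`, the image in `G` of the base group `C₂^p`. -/
def Vsub (p : ℕ) : Subgroup (WreathQuot p) :=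
  Subgroup.map (QuotientGroup.mk' _) (SemidirectProduct.inl (φ := wreathShift p)).range

open scoped commutatorElement

/-!
The projection `G → C_p` has kernel `V` and abelian image, so all commutators lie in `V`, and a
generating set cannot lie inside `V`. For odd `p`, `c` fixes no nontrivial element of `V`: a vector
that the cyclic shift fixes modulo constants is constant, hence central in `C₂ ≀ C_p`. So `x ↦ ⁅c, x⁆`
is injective on `V`. Since `⁅c, v c^a⁆ = ⁅c, v⁆`, we have `wᵢ = ⁅c, vᵢ⁆`; the subgroup `H` generated by
`c` and the `wᵢ` is stable under `⁅c, ·⁆`, which therefore permutes the finite set `V ∩ H`. Hence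
`vᵢ ∈ H`, and `H` contains every generator.
-/

section
variable {G : Type*} [Group G]

theorem commutatorElement_eq_commutatorElement_iff {c x y : G} :
    ⁅c, x⁆ = ⁅c, y⁆ ↔ c * (y⁻¹ * x) * c⁻¹ = y⁻¹ * x := by
  simp only [commutatorElement_def]
  constructor <;> intro h
  · calc c * (y⁻¹ * x) * c⁻¹ = (c * y * c⁻¹)⁻¹ * (c * x * c⁻¹ * x⁻¹) * x := by group
      _ = y⁻¹ * x := by rw [h]; group
  · calc c * x * c⁻¹ * x⁻¹ = c * y * c⁻¹ * (c * (y⁻¹ * x) * c⁻¹) * x⁻¹ := by group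
      _ = c * y * c⁻¹ * y⁻¹ := by rw [h]; group

theorem commutatorElement_mul_pow_right (c x : G) (k : ℕ) : ⁅c, x * c ^ k⁆ = ⁅c, x⁆ := by
  simp only [commutatorElement_def, mul_inv_rev, ← mul_assoc]
  group

theorem injOn_commutatorElement {V : Subgroup G} {c : G}
    (hfix : ∀ x ∈ V, c * x * c⁻¹ = x → x = 1) : Set.InjOn (⁅c, ·⁆) (V : Set G) :=
  fun _ hx _ hy hxy => (inv_mul_eq_one.mp (hfix _ (mul_mem (inv_mem hy) hx)
    (commutatorElement_eq_commutatorElement_iff.mp hxy))).symm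

/-- `⁅c, ·⁆` maps the finite set `V ∩ H` injectively into itself, hence onto itself. -/
theorem mem_of_commutatorElement_mem {V H : Subgroup G} [Finite V] {c x : G}
    (hV : ∀ y ∈ V, ⁅c, y⁆ ∈ V) (hinj : Set.InjOn (⁅c, ·⁆) (V : Set G)) (hc : c ∈ H)
    (hx : x ∈ V) (hcx : ⁅c, x⁆ ∈ H) : x ∈ H := by
  have hmaps : Set.MapsTo (⁅c, ·⁆) ((V : Set G) ∩ H) ((V : Set G) ∩ H) :=
    fun y ⟨hyV, hyH⟩ => ⟨hV y hyV, by
      show ⁅c, y⁆ ∈ H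
      rw [commutatorElement_def]
      exact mul_mem (mul_mem (mul_mem hc hyH) (inv_mem hc)) (inv_mem hyH)⟩
  have hbij := ((Set.toFinite _).injOn_iff_bijOn_of_mapsTo hmaps).mp
    (hinj.mono Set.inter_subset_left)
  obtain ⟨y, hy, hyx⟩ := hbij.surjOn ⟨hV x hx, hcx⟩
  exact hinj hy.1 hx hyx ▸ hy.2
end

/-- Going once around the cycle gives `p • k = 0`, and `p` is odd. -/
theorem ZMod.apply_eq_apply_zero_of_apply_add_one {p : ℕ} (hodd : Odd p)
    {f : ZMod p → ZMod 2} {k : ZMod 2} (hf : ∀ i, f (i + 1) = f i + k) (i : ZMod p) :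
    f i = f 0 := by
  have : NeZero p := ⟨hodd.pos.ne'⟩
  have hnat (m : ℕ) : f m = f 0 + m • k := by
    induction m with
    | zero => simp
    | succ m ih => rw [Nat.cast_succ, hf, ih, succ_nsmul, add_assoc]
  have hk : k = 0 := by
    have := hnat p
    rwa [ZMod.natCast_self, left_eq_add, nsmul_eq_mul, ZMod.natCast_eq_one_iff_odd.mpr hodd,
      one_mul] at this
  rw [← ZMod.natCast_zmod_val i, hnat, hk, smul_zero, add_zero]

namespace Wreath
open SemidirectProduct Multiplicative Subgroup

variable {p : ℕ}

theorem toAdd_mul_left_apply (x y : Wreath p) (i : ZMod p) :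
    (x * y).left.toAdd i = x.left.toAdd i + y.left.toAdd (i + x.right.toAdd) := rfl

variable (p)

theorem center_le_ker_rightHom : center (Wreath p) ≤ (rightHom : Wreath p →* _).ker := by
  intro z hz
  have h := congrArg (fun x => x.left.toAdd 0)
    ((mem_center_iff.mp hz) (inl (ofAdd (fun i => if i = 0 then 1 else 0))))
  simp only [toAdd_mul_left_apply, left_inl, right_inl, toAdd_ofAdd, toAdd_one, add_zero,
    zero_add] at h
  rw [if_pos trivial, add_comm, add_left_cancel_iff] at h
  split_ifs at h with hr
  · exact toAdd_eq_zero.mp hr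
  · exact absurd h one_ne_zero

theorem inl_ofAdd_mem_center_iff (f : ZMod p → ZMod 2) :
    (inl (ofAdd f) : Wreath p) ∈ center (Wreath p) ↔ ∀ i, f i = f 0 := by
  rw [mem_center_iff]
  constructor
  · intro h i
    have h := congrArg (fun x => x.left.toAdd 0) (h (inr (ofAdd i)))
    simp only [toAdd_mul_left_apply, left_inl, right_inl, left_inr, right_inr, toAdd_ofAdd,
      toAdd_one, add_zero] at h
    simpa using h
  · intro h t
    ext i
    · simp only [toAdd_mul_left_apply, left_inl, right_inl, toAdd_ofAdd, toAdd_one, add_zero]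
      rw [h i, h, add_comm]
    · simp

end Wreath

namespace WreathQuot
open SemidirectProduct Multiplicative

variable (p : ℕ)

def projRight : WreathQuot p →* Multiplicative (ZMod p) :=
  QuotientGroup.lift _ rightHom (Wreath.center_le_ker_rightHom p)

theorem Vsub_eq_ker : Vsub p = (projRight p).ker := by
  rw [projRight, QuotientGroup.ker_lift, ← range_inl_eq_ker_rightHom, Vsub]

theorem projRight_cElem : projRight p (cElem p) = ofAdd 1 := rfl

theorem commutatorElement_mem_Vsub (x y : WreathQuot p) : ⁅x, y⁆ ∈ Vsub p := by
  rw [Vsub_eq_ker, MonoidHom.mem_ker, map_commutatorElement]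
  exact commutatorElement_eq_one_iff_commute.mpr (Commute.all _ _)

theorem cElem_pow_mem_Vsub_iff (a : ℕ) : cElem p ^ a ∈ Vsub p ↔ (a : ZMod p) = 0 := by
  rw [Vsub_eq_ker, MonoidHom.mem_ker, map_pow, projRight_cElem, ← ofAdd_nsmul, nsmul_one,
    ofAdd_eq_one]

theorem cElem_conj_mk_inl (f : ZMod p → ZMod 2) :
    cElem p * QuotientGroup.mk' _ (inl (ofAdd f)) * (cElem p)⁻¹
      = QuotientGroup.mk' _ (inl (ofAdd fun i => f (i + 1))) := by
  rw [cElem, ← map_inv, ← map_mul, ← map_mul, ← map_inv, ← inl_aut]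
  rfl

variable {p} in
theorem eq_one_of_cElem_conj_eq (hodd : Odd p) {x : WreathQuot p} (hx : x ∈ Vsub p)
    (hfix : cElem p * x * (cElem p)⁻¹ = x) : x = 1 := by
  obtain ⟨_, ⟨u, rfl⟩, rfl⟩ := hx
  rw [← ofAdd_toAdd u] at hfix ⊢
  rw [cElem_conj_mk_inl, QuotientGroup.mk'_apply, QuotientGroup.mk'_apply, QuotientGroup.eq,
    ← map_inv, ← map_mul, ← ofAdd_neg, ← ofAdd_add, Wreath.inl_ofAdd_mem_center_iff] at hfix
  rw [QuotientGroup.mk'_apply, QuotientGroup.eq_one_iff, Wreath.inl_ofAdd_mem_center_iff]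
  refine ZMod.apply_eq_apply_zero_of_apply_add_one hodd (k := u.toAdd 1 - u.toAdd 0) fun i => ?_
  have := hfix i
  simp only [Pi.add_apply, Pi.neg_apply, zero_add] at this
  linear_combination -this

instance [NeZero p] : Finite (WreathQuot p) :=
  have : Finite (Wreath p) := Finite.of_equiv _ equivProd.symm
  inferInstance

end WreathQuot

/-- For an odd prime `p` and `G = (C₂ ≀ C_p)/Z = V ⋊ ⟨c⟩`: if
`v₁ c^{a₁}, …, v_n c^{a_n}` generate `G` (with `v_i ∈ V`), then some
`a_i ≢ 0 (mod p)`, each commutator `w_i = [c, v_i c^{a_i}]` lies in `V`,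
and if moreover `c` itself is among the generators (say the first one), then
`{c, w₂, …, w_n}` also generates `G`. -/
theorem commutator_generators (p : ℕ) (hp : p.Prime) (hodd : Odd p)
    (n : ℕ) (g : Fin (n + 1) → WreathQuot p)
    (v : Fin (n + 1) → WreathQuot p) (a : Fin (n + 1) → ℕ)
    (hv : ∀ i, v i ∈ Vsub p)
    (hgi : ∀ i, g i = v i * cElem p ^ a i)
    (hgen : Subgroup.closure (Set.range g) = ⊤) :
    (∃ i, (a i : ZMod p) ≠ 0) ∧
    (∀ i, ⁅cElem p, g i⁆ ∈ Vsub p) ∧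
    (g 0 = cElem p →
      Subgroup.closure ({cElem p} ∪ Set.range fun i => ⁅cElem p, g i⁆) = ⊤) := by
  have : Fact (1 < p) := ⟨hp.one_lt⟩
  have hw (i : Fin (n + 1)) : ⁅cElem p, g i⁆ ∈ Vsub p :=
    WreathQuot.commutatorElement_mem_Vsub p _ _
  refine ⟨?_, hw, fun _ => ?_⟩
  · by_contra! ha
    have hle : Subgroup.closure (Set.range g) ≤ Vsub p := by
      rw [Subgroup.closure_le]
      rintro _ ⟨i, rfl⟩
      rw [hgi]
      exact mul_mem (hv i) ((WreathQuot.cElem_pow_mem_Vsub_iff p _).mpr (ha i))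
    have hc : cElem p ^ 1 ∈ Vsub p := hle (hgen ▸ Subgroup.mem_top _)
    rw [WreathQuot.cElem_pow_mem_Vsub_iff, Nat.cast_one] at hc
    exact one_ne_zero hc
  · set H := Subgroup.closure ({cElem p} ∪ Set.range fun i => ⁅cElem p, g i⁆)
    have hcH : cElem p ∈ H := Subgroup.subset_closure (Or.inl rfl)
    have hvH (i : Fin (n + 1)) : v i ∈ H := by
      refine mem_of_commutatorElement_mem (fun y _ => WreathQuot.commutatorElement_mem_Vsub p _ y)
        (injOn_commutatorElement fun _ hx => WreathQuot.eq_one_of_cElem_conj_eq hodd hx)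
        hcH (hv i) ?_
      rw [← commutatorElement_mul_pow_right _ _ (a i), ← hgi]
      exact Subgroup.subset_closure (Or.inr ⟨i, rfl⟩)
    rw [eq_top_iff, ← hgen, Subgroup.closure_le]
    rintro _ ⟨i, rfl⟩
    rw [hgi]
    exact mul_mem (hvH i) (pow_mem hcH _)
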